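/- Define φ(θ, c) = θ − arctan( c·sin²θ / (1 + c·sin θ·cos θ) ) for θ ∈ ℝ and |c| < 2. Then ∂φ/∂θ (θ, c) → 1 uniformly in θ ∈ ℝ as c → 0: for every ε > 0 there exists δ > 0 such that for all c with 0 < |c| ≤ δ and all θ ∈ ℝ, the derivative of the map θ ↦ φ(θ, c) exists and satisfies |∂φ/∂θ(θ, c) − 1| ≤ ε. -/

import Mathlib

set_option maxHeartbeats 1000000

/-- The angle `φ(θ, c) = θ - arctan (c sin²θ / (1 + c sin θ cos θ))`. -/
noncomputable def phi (θ c : ℝ) : ℝ :=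
  θ - Real.arctan (c * Real.sin θ ^ 2 / (1 + c * Real.sin θ * Real.cos θ))

lemma abs_sin_mul_cos_le (θ : ℝ) : |Real.sin θ * Real.cos θ| ≤ 1 / 2 := by
  rw [abs_le]
  constructor <;>
  nlinarith [Real.sin_sq_add_cos_sq θ, sq_nonneg (Real.sin θ + Real.cos θ),
    sq_nonneg (Real.sin θ - Real.cos θ)]

lemma denom_pos (c : ℝ) (hc : |c| ≤ 1) (θ : ℝ) :
    1 / 2 ≤ 1 + c * Real.sin θ * Real.cos θ := by
  have h := abs_sin_mul_cos_le θ
  have h2 : |c * (Real.sin θ * Real.cos θ)| ≤ 1 / 2 := by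
    rw [abs_mul]
    calc |c| * |Real.sin θ * Real.cos θ| ≤ 1 * (1 / 2) := by
          apply mul_le_mul hc h (abs_nonneg _) (by norm_num)
      _ = 1 / 2 := by norm_num
  have := neg_abs_le (c * (Real.sin θ * Real.cos θ))
  nlinarith [h2]

lemma hasDerivAt_phi (c : ℝ) (hc : |c| ≤ 1) (θ : ℝ) :
    HasDerivAt (fun t => phi t c)
      (1 - (c * (2 * Real.sin θ * Real.cos θ) * (1 + c * Real.sin θ * Real.cos θ)
          - c * Real.sin θ ^ 2 * (c * (Real.cos θ ^ 2 - Real.sin θ ^ 2)))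
          / (1 + c * Real.sin θ * Real.cos θ) ^ 2
          / (1 + (c * Real.sin θ ^ 2 / (1 + c * Real.sin θ * Real.cos θ)) ^ 2)) θ := by
  have hd : (1 : ℝ) / 2 ≤ 1 + c * Real.sin θ * Real.cos θ := denom_pos c hc θ
  have hdne : 1 + c * Real.sin θ * Real.cos θ ≠ 0 := by linarith
  have hn : HasDerivAt (fun t => c * Real.sin t ^ 2) (c * (2 * Real.sin θ * Real.cos θ)) θ := by
    have := ((Real.hasDerivAt_sin θ).pow 2).const_mul c
    refine this.congr_deriv ?_
    ring
  have hden : HasDerivAt (fun t => 1 + c * Real.sin t * Real.cos t)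
      (c * (Real.cos θ ^ 2 - Real.sin θ ^ 2)) θ := by
    have := (((Real.hasDerivAt_sin θ).const_mul c).mul (Real.hasDerivAt_cos θ)).const_add 1
    refine this.congr_deriv ?_
    ring
  have hf : HasDerivAt (fun t => c * Real.sin t ^ 2 / (1 + c * Real.sin t * Real.cos t))
      ((c * (2 * Real.sin θ * Real.cos θ) * (1 + c * Real.sin θ * Real.cos θ)
        - c * Real.sin θ ^ 2 * (c * (Real.cos θ ^ 2 - Real.sin θ ^ 2)))
        / (1 + c * Real.sin θ * Real.cos θ) ^ 2) θ := hn.div hden hdne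
  have harctan := (Real.hasDerivAt_arctan
    (c * Real.sin θ ^ 2 / (1 + c * Real.sin θ * Real.cos θ))).comp θ hf
  have := (hasDerivAt_id θ).sub harctan
  refine this.congr_deriv ?_
  field_simp

/-- `∂φ/∂θ (θ, c) → 1` uniformly in `θ ∈ ℝ` as `c → 0`. -/
theorem deriv_phi_tendsto_uniformly :
    ∀ ε > 0, ∃ δ > 0, ∀ c : ℝ, 0 < |c| → |c| ≤ δ → ∀ θ : ℝ,
      DifferentiableAt ℝ (fun t => phi t c) θ ∧
      |deriv (fun t => phi t c) θ - 1| ≤ ε := by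
  intro ε hε
  refine ⟨min 1 (ε / 10), by positivity, fun c hc0 hcδ θ => ?_⟩
  have hc1 : |c| ≤ 1 := le_trans hcδ (min_le_left _ _)
  have hcε : |c| ≤ ε / 10 := le_trans hcδ (min_le_right _ _)
  have h := hasDerivAt_phi c hc1 θ
  refine ⟨h.differentiableAt, ?_⟩
  rw [h.deriv]
  set s := Real.sin θ
  set co := Real.cos θ
  set d := 1 + c * s * co with hd_def
  have hd : (1 : ℝ) / 2 ≤ d := denom_pos c hc1 θ
  have hdpos : 0 < d := by linarith
  set N := c * (2 * s * co) * d - c * s ^ 2 * (c * (co ^ 2 - s ^ 2)) with hN_def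
  set q := c * s ^ 2 / d with hq_def
  have hE : (1 : ℝ) ≤ 1 + q ^ 2 := by nlinarith [sq_nonneg q]
  -- |deriv - 1| = |N| / d^2 / (1 + q^2)
  have hrw : |1 - N / d ^ 2 / (1 + q ^ 2) - 1| = |N| / d ^ 2 / (1 + q ^ 2) := by
    rw [show 1 - N / d ^ 2 / (1 + q ^ 2) - 1 = -(N / d ^ 2 / (1 + q ^ 2)) by ring,
      abs_neg, abs_div, abs_div, abs_of_pos (by positivity : (0:ℝ) < 1 + q ^ 2),
      abs_of_pos (by positivity : (0:ℝ) < d ^ 2)]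
  rw [hrw]
  -- bound |N|
  have hs : |s| ≤ 1 := Real.abs_sin_le_one θ
  have hco : |co| ≤ 1 := Real.abs_cos_le_one θ
  have hsc : |s * co| ≤ 1 / 2 := abs_sin_mul_cos_le θ
  have hdabs : |d| ≤ 3 / 2 := by
    rw [abs_le]
    have h1 : |c * s * co| ≤ 1 / 2 := by
      rw [mul_assoc, abs_mul]
      calc |c| * |s * co| ≤ 1 * (1 / 2) :=
            mul_le_mul hc1 hsc (abs_nonneg _) (by norm_num)
        _ = 1 / 2 := by norm_num
    constructor <;> [nlinarith [neg_abs_le (c * s * co)]; nlinarith [le_abs_self (c * s * co)]]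
  have hN : |N| ≤ 5 / 2 * |c| := by
    have h1 : |c * (2 * s * co) * d| ≤ 3 / 2 * |c| := by
      rw [abs_mul, abs_mul]
      calc |c| * |2 * s * co| * |d| ≤ |c| * 1 * (3 / 2) := by
            apply mul_le_mul _ hdabs (abs_nonneg _) (by positivity)
            apply mul_le_mul_of_nonneg_left _ (abs_nonneg c)
            rw [show (2:ℝ) * s * co = 2 * (s * co) by ring, abs_mul]
            calc |(2:ℝ)| * |s * co| ≤ 2 * (1 / 2) := by
                  apply mul_le_mul (by simp) hsc (abs_nonneg _) (by norm_num)
              _ = 1 := by norm_num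
        _ = 3 / 2 * |c| := by ring
    have h2 : |c * s ^ 2 * (c * (co ^ 2 - s ^ 2))| ≤ |c| := by
      rw [abs_mul, abs_mul, abs_mul]
      have hs2 : |s ^ 2| ≤ 1 := by
        rw [abs_pow]; exact pow_le_one₀ (abs_nonneg _) hs
      have hdiff : |co ^ 2 - s ^ 2| ≤ 1 := by
        rw [abs_le]
        constructor <;> nlinarith [Real.sin_sq_add_cos_sq θ, sq_nonneg s, sq_nonneg co]
      nlinarith [abs_nonneg c, abs_nonneg (s ^ 2), abs_nonneg (co ^ 2 - s ^ 2),
        mul_nonneg (abs_nonneg c) (abs_nonneg (s ^ 2)),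
        mul_nonneg (abs_nonneg c) (abs_nonneg (co ^ 2 - s ^ 2)),
        mul_le_mul hc1 hs2 (abs_nonneg _) (zero_le_one),
        mul_le_mul hc1 hdiff (abs_nonneg _) (zero_le_one)]
    calc |N| ≤ |c * (2 * s * co) * d| + |c * s ^ 2 * (c * (co ^ 2 - s ^ 2))| := by
          rw [hN_def]; exact abs_sub _ _
      _ ≤ 3 / 2 * |c| + |c| := by linarith
      _ = 5 / 2 * |c| := by ring
  have hd2 : (1 : ℝ) / 4 ≤ d ^ 2 := by nlinarith
  calc |N| / d ^ 2 / (1 + q ^ 2) ≤ |N| / d ^ 2 / 1 := by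
        apply div_le_div_of_nonneg_left _ (by norm_num) hE
        · positivity
      _ = |N| / d ^ 2 := by rw [div_one]
      _ ≤ (5 / 2 * |c|) / (1 / 4) := by
          apply div_le_div₀ (by positivity) hN (by norm_num) hd2
      _ = 10 * |c| := by ring
      _ ≤ 10 * (ε / 10) := by linarith
      _ = ε := by ring
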